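/- arXiv:1609.07789 — 3 statements merged into one kernel-verified Lean document; each statement's English description precedes it below -/
import Mathlib

section
/- Every total domination root of the graph H(3) (for any graph H of order n ≥ 1) lies in the set {-2, 0}. -/
open Polynomial Finset

/-- `D` is a total dominating set of `G`: every vertex has a neighbor in `D`. -/
def isTDS {V : Type*} (G : SimpleGraph V) (D : Finset V) : Prop :=
  ∀ v : V, ∃ u ∈ D, G.Adj v u

/-- The total domination polynomial of `G` (with integer coefficients). -/
noncomputable def tdPoly {V : Type*} [Finite V] (G : SimpleGraph V) : Polynomial ℤ :=
  letI := Fintype.ofFinite V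
  letI : DecidablePred (isTDS G) := Classical.decPred _
  ∑ D ∈ Finset.univ.filter (isTDS G), X ^ D.card

/-- `tdCount G i` is the number of total dominating sets of `G` of cardinality `i`. -/
noncomputable def tdCount {V : Type*} [Finite V] (G : SimpleGraph V) (i : ℕ) : ℕ :=
  letI := Fintype.ofFinite V
  letI : DecidablePred (fun D : Finset V => D.card = i ∧ isTDS G D) := Classical.decPred _
  (Finset.univ.filter (fun D : Finset V => D.card = i ∧ isTDS G D)).card

/-- The total domination number of `G`. -/
noncomputable def tdNum {V : Type*} (G : SimpleGraph V) : ℕ :=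
  sInf {k | ∃ D : Finset V, D.card = k ∧ isTDS G D}

/-- `attachP3 H` : to every vertex of `H` a path `P₃` is attached, identified at an end vertex.
The first summand is the vertex set of `H`. -/
def attachP3 {V : Type*} (H : SimpleGraph V) : SimpleGraph (V ⊕ V ⊕ V) :=
  SimpleGraph.fromRel (fun a b =>
    (∃ u v, a = .inl u ∧ b = .inl v ∧ H.Adj u v) ∨
    (∃ v, a = .inl v ∧ b = .inr (.inl v)) ∨
    (∃ v, a = .inr (.inl v) ∧ b = .inr (.inr v)))

/-! A set is totally dominating in `attachP3 H` exactly when its trace on every attached path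
`v – m – ℓ` is a total dominating set of that `P₃` (the leaf `ℓ` forces `m`, and `m` needs `v` or
`ℓ`); the edges of `H` play no role. The sets therefore factor path by path, and
`D_t(attachP3 H, x) = D_t(P₃, x) ^ n = (x ^ 3 + 2 x ^ 2) ^ n`, whose only roots are `0` and `-2`. -/

lemma tdPoly_eq_sum {W : Type*} [Fintype W] (G : SimpleGraph W) [DecidablePred (isTDS G)] :
    tdPoly G = ∑ D ∈ univ.filter (isTDS G), X ^ #D := by
  rw [tdPoly]
  congr!

lemma sum_filter_pow_card_eq_pow {W ι β R : Type*} [Fintype W] [Fintype ι] [DecidableEq ι]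
    [CommSemiring R] (e : Finset W ≃ (ι → β)) (wt : β → ℕ)
    (hcard : ∀ D, #D = ∑ i, wt (e D i)) (P : Finset W → Prop) [DecidablePred P]
    (S : Finset β) (hP : ∀ D, P D ↔ ∀ i, e D i ∈ S) (r : R) :
    ∑ D ∈ univ.filter P, r ^ #D = (∑ s ∈ S, r ^ wt s) ^ Fintype.card ι := by
  rw [← Finset.card_univ, ← Finset.prod_const, Finset.prod_univ_sum]
  refine Finset.sum_equiv e (fun D => by simp [hP]) (fun D _ => ?_)
  rw [hcard, Finset.prod_pow_eq_pow_sum]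

namespace attachP3

variable {V : Type*} (H : SimpleGraph V)

lemma adj_inl_mid (v : V) : (attachP3 H).Adj (.inl v) (.inr (.inl v)) := by
  simp [attachP3]

lemma adj_mid_iff (v : V) (x : V ⊕ V ⊕ V) :
    (attachP3 H).Adj (.inr (.inl v)) x ↔ x = .inl v ∨ x = .inr (.inr v) := by
  rcases x with u | u | u <;> simp [attachP3, eq_comm]

lemma adj_leaf_iff (v : V) (x : V ⊕ V ⊕ V) :
    (attachP3 H).Adj (.inr (.inr v)) x ↔ x = .inr (.inl v) := by
  rcases x with u | u | u <;> simp [attachP3, eq_comm]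

def traceEquiv [Fintype V] [DecidableEq V] : Finset (V ⊕ V ⊕ V) ≃ (V → Bool × Bool × Bool) where
  toFun D v := (.inl v ∈ D, .inr (.inl v) ∈ D, .inr (.inr v) ∈ D)
  invFun f := univ.filter fun x => Sum.elim (fun v => (f v).1)
    (Sum.elim (fun v => (f v).2.1) (fun v => (f v).2.2)) x
  left_inv D := by ext (v | v | v) <;> simp
  right_inv f := by funext v; simp

def trueCount (s : Bool × Bool × Bool) : ℕ := s.1.toNat + s.2.1.toNat + s.2.2.toNat

lemma card_eq_sum_trueCount [Fintype V] [DecidableEq V] (D : Finset (V ⊕ V ⊕ V)) :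
    #D = ∑ v, trueCount (traceEquiv D v) := by
  conv_lhs => rw [← Finset.filter_univ_mem D, Finset.card_filter]
  simp only [Fintype.sum_sum_type, traceEquiv, Equiv.coe_fn_mk, trueCount, Bool.toNat,
    Bool.cond_decide, Finset.sum_add_distrib, add_assoc]

/-- The total dominating sets of the path `P₃`, read from an end vertex to the other. -/
def tdsPatterns : Finset (Bool × Bool × Bool) :=
  {(true, true, true), (true, true, false), (false, true, true)}

lemma mem_tdsPatterns (a b c : Bool) : (a, b, c) ∈ tdsPatterns ↔ b ∧ (a ∨ c) := by
  revert a b c; decide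

lemma isTDS_iff_traceEquiv_mem [Fintype V] [DecidableEq V] (D : Finset (V ⊕ V ⊕ V)) :
    isTDS (attachP3 H) D ↔ ∀ v, traceEquiv D v ∈ tdsPatterns := by
  simp only [mem_tdsPatterns, traceEquiv, Equiv.coe_fn_mk, decide_eq_true_eq]
  constructor
  · intro hD v
    obtain ⟨_, hx, hadj⟩ := hD (.inr (.inr v))
    obtain ⟨_, hy, hadj'⟩ := hD (.inr (.inl v))
    rw [adj_leaf_iff] at hadj
    rw [adj_mid_iff] at hadj'
    subst hadj
    rcases hadj' with rfl | rfl
    exacts [⟨hx, .inl hy⟩, ⟨hx, .inr hy⟩]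
  · rintro hD (v | v | v)
    · exact ⟨_, (hD v).1, adj_inl_mid H v⟩
    · rcases (hD v).2 with h | h
      exacts [⟨_, h, (adj_mid_iff H v _).2 (.inl rfl)⟩, ⟨_, h, (adj_mid_iff H v _).2 (.inr rfl)⟩]
    · exact ⟨_, (hD v).1, (adj_leaf_iff H v _).2 rfl⟩

lemma sum_tdsPatterns_pow {R : Type*} [CommSemiring R] (r : R) :
    ∑ s ∈ tdsPatterns, r ^ trueCount s = r ^ 2 * (r + 2) := by
  rw [tdsPatterns, Finset.sum_insert (by decide), Finset.sum_pair (by decide)]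
  simp only [trueCount, Bool.toNat_true, Bool.toNat_false]
  ring

end attachP3

theorem tdPoly_attachP3 {V : Type*} [Fintype V] (H : SimpleGraph V) :
    tdPoly (attachP3 H) = (X ^ 2 * (X + 2)) ^ Fintype.card V := by
  classical
  rw [tdPoly_eq_sum, ← attachP3.sum_tdsPatterns_pow]
  exact sum_filter_pow_card_eq_pow attachP3.traceEquiv _ attachP3.card_eq_sum_trueCount _ _
    (attachP3.isTDS_iff_traceEquiv_mem H) X

theorem tdRoots_attachP3_general {V : Type*} [Fintype V] (H : SimpleGraph V) (r : ℂ)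
    (h : Polynomial.aeval r (tdPoly (attachP3 H)) = 0) :
    r = -2 ∨ r = 0 := by
  simp only [tdPoly_attachP3, map_pow, map_mul, map_add, aeval_X, map_ofNat] at h
  rcases mul_eq_zero.mp (eq_zero_of_pow_eq_zero h) with h | h
  · exact .inr (eq_zero_of_pow_eq_zero h)
  · exact .inl (eq_neg_of_add_eq_zero_left h)

theorem tdRoots_attachP3 {V : Type*} [Fintype V] (H : SimpleGraph V)
    (hn : 1 ≤ Fintype.card V) (r : ℂ)
    (h : Polynomial.aeval r (tdPoly (attachP3 H)) = 0) :
    r = -2 ∨ r = 0 :=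
  tdRoots_attachP3_general H r h
end

section
/- For a vertex u of a graph G with a neighbor v such that the closed neighborhoods satisfy N[v] ⊆ N[u], the total domination polynomial satisfies D_t(G,x) = D_t(G∖u, x) + x·D_t(G/u, x) + x^2 · Σ_{w ∈ N(u)} D_t(G ∖ N[{u,w}], x), where G/u is the vertex contraction (join all vertices of N(u) pairwise and delete u). -/
open Polynomial Finset

/-- Vertex contraction: all neighbors of u are joined pairwise, and u is deleted. -/
def contract {V : Type*} (G : SimpleGraph V) (u : V) : SimpleGraph {x : V // x ≠ u} :=
  SimpleGraph.fromRel (fun a b => G.Adj a.1 b.1 ∨ (G.Adj u a.1 ∧ G.Adj u b.1))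

open scoped Classical

section helpers
variable {V : Type*} [Fintype V]

lemma tdPoly_eq (G : SimpleGraph V) :
    tdPoly G = ∑ D ∈ Finset.univ.filter (isTDS G), (X : Polynomial ℤ) ^ D.card := by
  rw [tdPoly]
  apply Finset.sum_congr _ (fun _ _ => rfl)
  ext D
  simp [Finset.mem_filter]

lemma tdPoly_subtype (p : V → Prop) (H : SimpleGraph {x : V // p x}) :
    tdPoly H = ∑ D ∈ Finset.univ.filter
      (fun D : Finset V => (∀ x ∈ D, p x) ∧
        ∀ x : {x : V // p x}, ∃ y ∈ D, ∃ hy : p y, H.Adj x ⟨y, hy⟩),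
      (X : Polynomial ℤ) ^ D.card := by
  rw [tdPoly_eq]
  refine Finset.sum_nbij' (fun D => D.map (Function.Embedding.subtype p))
    (fun D => D.subtype p) ?_ ?_ ?_ ?_ ?_
  · intro D hD
    simp only [mem_filter, mem_univ, true_and] at hD ⊢
    constructor
    · intro x hx
      simp only [Finset.mem_map, Function.Embedding.coe_subtype] at hx
      obtain ⟨y, _, rfl⟩ := hx
      exact y.2
    · intro x
      obtain ⟨y, hy, hadj⟩ := hD x
      exact ⟨y.1, Finset.mem_map_of_mem _ hy, y.2, by simpa using hadj⟩
  · intro D hD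
    simp only [mem_filter, mem_univ, true_and] at hD ⊢
    intro x
    obtain ⟨y, hy, hpy, hadj⟩ := hD.2 x
    exact ⟨⟨y, hpy⟩, by simp [Finset.mem_subtype, hy], hadj⟩
  · intro D _
    ext ⟨a, ha⟩
    simp only [Finset.mem_subtype, Finset.mem_map, Function.Embedding.coe_subtype]
    constructor
    · rintro ⟨b, hb, rfl⟩
      exact hb
    · intro hb
      exact ⟨⟨a, ha⟩, hb, rfl⟩
  · intro D hD
    simp only [mem_filter, mem_univ, true_and] at hD
    show Finset.map _ (Finset.subtype p D) = D
    rw [Finset.subtype_map, Finset.filter_true_of_mem hD.1]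
  · intro D _
    rw [Finset.card_map]

lemma contract_adj (G : SimpleGraph V) (u : V) (a b : {x : V // x ≠ u}) :
    (contract G u).Adj a b ↔ a.1 ≠ b.1 ∧ (G.Adj a.1 b.1 ∨ (G.Adj u a.1 ∧ G.Adj u b.1)) := by
  unfold _root_.contract
  rw [SimpleGraph.fromRel_adj]
  constructor
  · rintro ⟨hne, (h | h) | (h | h)⟩
    · exact ⟨Subtype.coe_ne_coe.mpr hne, Or.inl h⟩
    · exact ⟨Subtype.coe_ne_coe.mpr hne, Or.inr h⟩
    · exact ⟨Subtype.coe_ne_coe.mpr hne, Or.inl h.symm⟩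
    · exact ⟨Subtype.coe_ne_coe.mpr hne, Or.inr ⟨h.2, h.1⟩⟩
  · rintro ⟨hne, hor⟩
    exact ⟨Subtype.coe_ne_coe.mp hne, Or.inl hor⟩

/-- The key predicate: `D.erase u` (transported) is a TDS of the contraction. -/
def Pc (G : SimpleGraph V) (u : V) (E : Finset V) : Prop :=
  ∀ x : V, x ≠ u → ∃ y ∈ E, y ≠ u ∧ y ≠ x ∧ (G.Adj x y ∨ (G.Adj u x ∧ G.Adj u y))

lemma pc_iff (G : SimpleGraph V) (u : V) (E : Finset V) (hE : ∀ x ∈ E, x ≠ u) :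
    (∀ x : {x : V // x ≠ u}, ∃ y ∈ E, ∃ hy : y ≠ u, (contract G u).Adj x ⟨y, hy⟩)
      ↔ Pc G u E := by
  constructor
  · intro H x hx
    obtain ⟨y, hy, hyu, hadj⟩ := H ⟨x, hx⟩
    rw [contract_adj] at hadj
    exact ⟨y, hy, hyu, hadj.1.symm, hadj.2⟩
  · intro H x
    obtain ⟨y, hy, hyu, hyx, hor⟩ := H x.1 x.2
    exact ⟨y, hy, hyu, (contract_adj G u _ _).mpr ⟨hyx.symm, hor⟩⟩

lemma induce_pred_iff (G : SimpleGraph V) (s : Set V) (S : Finset V) :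
    ((∀ x ∈ S, x ∈ s) ∧ ∀ x : s, ∃ y ∈ S, ∃ hy : y ∈ s, (G.induce s).Adj x ⟨y, hy⟩)
      ↔ ((∀ x ∈ S, x ∈ s) ∧ ∀ x ∈ s, ∃ y ∈ S, G.Adj x y) := by
  constructor
  · rintro ⟨h1, h2⟩
    refine ⟨h1, fun x hx => ?_⟩
    obtain ⟨y, hy, hys, hadj⟩ := h2 ⟨x, hx⟩
    exact ⟨y, hy, by simpa [SimpleGraph.comap_adj] using hadj⟩
  · rintro ⟨h1, h2⟩
    refine ⟨h1, fun x => ?_⟩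
    obtain ⟨y, hy, hadj⟩ := h2 x.1 x.2
    exact ⟨y, hy, h1 y hy, by simpa [SimpleGraph.comap_adj] using hadj⟩

lemma mem_cpl (G : SimpleGraph V) (u w x : V) :
    x ∈ (((G.neighborSet u ∪ {u}) ∪ (G.neighborSet w ∪ {w}))ᶜ : Set V)
      ↔ ¬G.Adj u x ∧ x ≠ u ∧ ¬G.Adj w x ∧ x ≠ w := by
  simp only [Set.mem_compl_iff, Set.mem_union, SimpleGraph.mem_neighborSet,
    Set.mem_singleton_iff, not_or]
  tauto

end helpers

section main
variable {V : Type*} [Fintype V] (G : SimpleGraph V) (u : V)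

lemma sumA (v : V) (huv : G.Adj u v)
    (h : G.neighborSet v ∪ {v} ⊆ G.neighborSet u ∪ {u}) :
    ∑ D ∈ Finset.univ.filter (fun D : Finset V => isTDS G D ∧ u ∉ D),
        (X : Polynomial ℤ) ^ D.card
      = tdPoly (G.induce {x : V | x ≠ u}) := by
  rw [tdPoly_subtype (fun x => x ∈ ({x : V | x ≠ u} : Set V)) (G.induce {x : V | x ≠ u})]
  apply Finset.sum_congr _ (fun _ _ => rfl)
  ext D
  simp only [mem_filter, mem_univ, true_and]
  constructor
  · rintro ⟨hTDS, hu⟩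
    refine ⟨fun x hx hxu => hu (hxu ▸ hx), fun x => ?_⟩
    obtain ⟨y, hy, hadj⟩ := hTDS x.1
    have hyu : y ≠ u := fun e => hu (e ▸ hy)
    exact ⟨y, hy, hyu, by simpa [SimpleGraph.comap_adj] using hadj⟩
  · rintro ⟨hsub, hdom⟩
    have hu : u ∉ D := fun hu => (hsub u hu) rfl
    refine ⟨fun x => ?_, hu⟩
    by_cases hx : x = u
    · rw [hx]
      obtain ⟨y, hy, hyu, hadj⟩ := hdom ⟨v, huv.ne'⟩
      have hGvy : G.Adj v y := by simpa [SimpleGraph.comap_adj] using hadj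
      have hmem : y ∈ G.neighborSet u ∪ {u} := h (Set.mem_union_left _ hGvy)
      simp only [Set.mem_union, SimpleGraph.mem_neighborSet, Set.mem_singleton_iff] at hmem
      rcases hmem with hy' | hy'
      · exact ⟨y, hy, hy'⟩
      · exact absurd hy' hyu
    · obtain ⟨y, hy, hyu, hadj⟩ := hdom ⟨x, hx⟩
      exact ⟨y, hy, by simpa [SimpleGraph.comap_adj] using hadj⟩

lemma sumB (v : V) (huv : G.Adj u v)
    (h : G.neighborSet v ∪ {v} ⊆ G.neighborSet u ∪ {u}) :
    ∑ D ∈ Finset.univ.filter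
        (fun D : Finset V => isTDS G D ∧ u ∈ D ∧ Pc G u (D.erase u)),
        (X : Polynomial ℤ) ^ D.card
      = X * tdPoly (contract G u) := by
  rw [tdPoly_subtype (fun x => x ≠ u) (contract G u), Finset.mul_sum]
  refine Finset.sum_nbij' (fun D => D.erase u) (fun E => insert u E) ?_ ?_ ?_ ?_ ?_
  · intro D hD
    simp only [mem_filter, mem_univ, true_and] at hD ⊢
    obtain ⟨hTDS, hu, hPc⟩ := hD
    refine ⟨fun x hx => (Finset.mem_erase.mp hx).1, ?_⟩
    exact (pc_iff G u (D.erase u) (fun x hx => (Finset.mem_erase.mp hx).1)).mpr hPc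
  · intro E hE
    simp only [mem_filter, mem_univ, true_and] at hE ⊢
    obtain ⟨hEu, hdom⟩ := hE
    have huE : u ∉ E := fun hu => hEu u hu rfl
    have hPc : Pc G u E := (pc_iff G u E hEu).mp hdom
    refine ⟨fun x => ?_, Finset.mem_insert_self u E, ?_⟩
    · by_cases hx : x = u
      · rw [hx]
        obtain ⟨y, hy, hyu, hyv, hor⟩ := hPc v huv.ne'
        rcases hor with hadj | ⟨_, hadj⟩
        · have hmem : y ∈ G.neighborSet u ∪ {u} := h (Set.mem_union_left _ hadj)
          simp only [Set.mem_union, SimpleGraph.mem_neighborSet,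
            Set.mem_singleton_iff] at hmem
          rcases hmem with hy' | hy'
          · exact ⟨y, Finset.mem_insert_of_mem hy, hy'⟩
          · exact absurd hy' hyu
        · exact ⟨y, Finset.mem_insert_of_mem hy, hadj⟩
      · obtain ⟨y, hy, hyu, hyx, hor⟩ := hPc x hx
        rcases hor with hadj | ⟨hux, _⟩
        · exact ⟨y, Finset.mem_insert_of_mem hy, hadj⟩
        · exact ⟨u, Finset.mem_insert_self u E, hux.symm⟩
    · rw [Finset.erase_insert huE]
      exact hPc
  · intro D hD
    simp only [mem_filter, mem_univ, true_and] at hD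
    exact Finset.insert_erase hD.2.1
  · intro E hE
    simp only [mem_filter, mem_univ, true_and] at hE
    exact Finset.erase_insert (fun hu => hE.1 u hu rfl)
  · intro D hD
    simp only [mem_filter, mem_univ, true_and] at hD
    rw [← Finset.card_erase_add_one hD.2.1, pow_succ]
    ring

lemma structC (D : Finset V) (hTDS : isTDS G D) (hu : u ∈ D)
    (hnPc : ¬ Pc G u (D.erase u)) :
    ∃ w, w ∈ D ∧ G.Adj u w ∧ (∀ y ∈ D, G.Adj u y → y = w) ∧
      (∀ y ∈ D, G.Adj w y → y = u) := by
  rw [Pc] at hnPc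
  push_neg at hnPc
  obtain ⟨x, hxu, hx⟩ := hnPc
  obtain ⟨w₀, hw₀D, hw₀⟩ := hTDS u
  obtain ⟨y₀, hy₀D, hy₀⟩ := hTDS x
  have hy₀x : y₀ ≠ x := fun e => G.irrefl (e ▸ hy₀)
  have hux : G.Adj u x := by
    by_cases hy₀u : y₀ = u
    · rw [hy₀u] at hy₀
      exact hy₀.symm
    · have := hx y₀ (Finset.mem_erase.mpr ⟨hy₀u, hy₀D⟩) hy₀u hy₀x
      exact absurd hy₀ this.1
  have hw₀x : w₀ = x := by
    by_contra hne
    have hw₀u : w₀ ≠ u := hw₀.ne'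
    exact (hx w₀ (Finset.mem_erase.mpr ⟨hw₀u, hw₀D⟩) hw₀u hne).2 hux hw₀
  refine ⟨x, hw₀x ▸ hw₀D, hux, ?_, ?_⟩
  · intro y hyD hadj
    by_contra hne
    have hyu : y ≠ u := hadj.ne'
    exact (hx y (Finset.mem_erase.mpr ⟨hyu, hyD⟩) hyu hne).2 hux hadj
  · intro y hyD hadj
    by_contra hne
    have hyx : y ≠ x := hadj.ne'
    exact (hx y (Finset.mem_erase.mpr ⟨hne, hyD⟩) hne hyx).1 hadj

noncomputable def keyv (D : Finset V) : V :=
  if hn : (D.filter (fun y => G.Adj u y)).Nonempty then hn.choose else u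

lemma keyv_eq (D : Finset V) (w : V) (hwD : w ∈ D) (hw : G.Adj u w)
    (huniq : ∀ y ∈ D, G.Adj u y → y = w) : keyv G u D = w := by
  have hn : (D.filter (fun y => G.Adj u y)).Nonempty :=
    ⟨w, Finset.mem_filter.mpr ⟨hwD, hw⟩⟩
  rw [keyv, dif_pos hn]
  have hc := hn.choose_spec
  rw [Finset.mem_filter] at hc
  exact huniq _ hc.1 hc.2

lemma sumC :
    ∑ D ∈ Finset.univ.filter
        (fun D : Finset V => isTDS G D ∧ u ∈ D ∧ ¬ Pc G u (D.erase u)),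
        (X : Polynomial ℤ) ^ D.card
      = X ^ 2 * ∑ w ∈ Finset.univ.filter (fun w : V => G.Adj u w),
          tdPoly (G.induce (((G.neighborSet u ∪ {u}) ∪ (G.neighborSet w ∪ {w}))ᶜ)) := by
  rw [Finset.mul_sum]
  have hrw : ∀ w ∈ Finset.univ.filter (fun w : V => G.Adj u w),
      (X : Polynomial ℤ) ^ 2 *
          tdPoly (G.induce (((G.neighborSet u ∪ {u}) ∪ (G.neighborSet w ∪ {w}))ᶜ))
        = ∑ S ∈ Finset.univ.filter (fun S : Finset V =>
            (∀ x ∈ S, x ∈ (((G.neighborSet u ∪ {u}) ∪ (G.neighborSet w ∪ {w}))ᶜ : Set V)) ∧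
            ∀ x ∈ (((G.neighborSet u ∪ {u}) ∪ (G.neighborSet w ∪ {w}))ᶜ : Set V),
              ∃ y ∈ S, G.Adj x y),
            X ^ (S.card + 2) := by
    intro w _
    rw [tdPoly_subtype (fun x =>
        x ∈ (((G.neighborSet u ∪ {u}) ∪ (G.neighborSet w ∪ {w}))ᶜ : Set V))
      (G.induce (((G.neighborSet u ∪ {u}) ∪ (G.neighborSet w ∪ {w}))ᶜ)), Finset.mul_sum]
    refine Finset.sum_congr ?_ ?_
    · ext S
      simp only [Finset.mem_filter, Finset.mem_univ, true_and]
      exact induce_pred_iff G _ S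
    · intro S _
      rw [pow_add]
      ring
  have key : ∑ D ∈ Finset.univ.filter
        (fun D : Finset V => isTDS G D ∧ u ∈ D ∧ ¬ Pc G u (D.erase u)),
        (X : Polynomial ℤ) ^ D.card
      = ∑ p ∈ (Finset.univ.filter (fun w : V => G.Adj u w)).sigma
          (fun w => Finset.univ.filter (fun S : Finset V =>
            (∀ x ∈ S, x ∈ (((G.neighborSet u ∪ {u}) ∪ (G.neighborSet w ∪ {w}))ᶜ : Set V)) ∧
            ∀ x ∈ (((G.neighborSet u ∪ {u}) ∪ (G.neighborSet w ∪ {w}))ᶜ : Set V),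
              ∃ y ∈ S, G.Adj x y)),
          (X : Polynomial ℤ) ^ (p.2.card + 2) := by
    refine Finset.sum_nbij'
      (fun D => (⟨keyv G u D, (D.erase u).erase (keyv G u D)⟩ : Σ _ : V, Finset V))
      (fun p => insert u (insert p.1 p.2)) ?_ ?_ ?_ ?_ ?_
    · intro D hD
      simp only [Finset.mem_filter, Finset.mem_univ, true_and] at hD
      obtain ⟨hTDS, hu, hnPc⟩ := hD
      obtain ⟨w, hwD, hw, huniq1, huniq2⟩ := structC G u D hTDS hu hnPc
      have hk : keyv G u D = w := keyv_eq G u D w hwD hw huniq1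
      rw [Finset.mem_sigma]
      constructor
      · simp only [Finset.mem_filter, Finset.mem_univ, true_and, hk]
        exact hw
      · simp only [Finset.mem_filter, Finset.mem_univ, true_and, hk]
        constructor
        · intro x hx
          have hxw : x ≠ w := (Finset.mem_erase.mp hx).1
          have hxD : x ∈ D.erase u := (Finset.mem_erase.mp hx).2
          have hxu : x ≠ u := (Finset.mem_erase.mp hxD).1
          have hxD' : x ∈ D := (Finset.mem_erase.mp hxD).2
          rw [mem_cpl]
          refine ⟨fun hadj => hxw (huniq1 x hxD' hadj), hxu,
            fun hadj => hxu (huniq2 x hxD' hadj), hxw⟩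
        · intro x hxc
          rw [mem_cpl] at hxc
          obtain ⟨hnux, hxu, hnwx, hxw⟩ := hxc
          obtain ⟨y, hyD, hadj⟩ := hTDS x
          have hyu : y ≠ u := fun e => hnux (by rw [e] at hadj; exact hadj.symm)
          have hyw : y ≠ w := fun e => hnwx (by rw [e] at hadj; exact hadj.symm)
          exact ⟨y, Finset.mem_erase.mpr ⟨hyw, Finset.mem_erase.mpr ⟨hyu, hyD⟩⟩, hadj⟩
    · rintro ⟨w, S⟩ hp
      rw [Finset.mem_sigma] at hp
      obtain ⟨hw, hS⟩ := hp
      simp only [Finset.mem_filter, Finset.mem_univ, true_and] at hw hS ⊢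
      obtain ⟨hsub, hdom⟩ := hS
      have huS : u ∉ S := fun hu => ((mem_cpl G u w u).mp (hsub u hu)).2.1 rfl
      have hwS : w ∉ S := fun hws => ((mem_cpl G u w w).mp (hsub w hws)).2.2.2 rfl
      have huw : u ≠ w := hw.ne
      have huI : u ∉ insert w S := by
        simp only [Finset.mem_insert]
        rintro (e | e)
        exacts [huw e, huS e]
      refine ⟨?_, Finset.mem_insert_self u _, ?_⟩
      · intro x
        by_cases h1 : G.Adj u x
        · exact ⟨u, Finset.mem_insert_self u _, h1.symm⟩
        by_cases h2 : x = u
        · refine ⟨w, Finset.mem_insert_of_mem (Finset.mem_insert_self w S), ?_⟩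
          rw [h2]; exact hw
        by_cases h3 : G.Adj w x
        · exact ⟨w, Finset.mem_insert_of_mem (Finset.mem_insert_self w S), h3.symm⟩
        by_cases h4 : x = w
        · refine ⟨u, Finset.mem_insert_self u _, ?_⟩
          rw [h4]; exact hw.symm
        · obtain ⟨y, hyS, hadj⟩ := hdom x ((mem_cpl G u w x).mpr ⟨h1, h2, h3, h4⟩)
          exact ⟨y, Finset.mem_insert_of_mem (Finset.mem_insert_of_mem hyS), hadj⟩
      · rw [Finset.erase_insert huI]
        intro hPc
        obtain ⟨y, hyI, hyu, hyw, hor⟩ := hPc w hw.ne'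
        rcases Finset.mem_insert.mp hyI with e | hyS
        · exact hyw e
        · have := (mem_cpl G u w y).mp (hsub y hyS)
          rcases hor with hadj | ⟨_, hadj⟩
          · exact this.2.2.1 hadj
          · exact this.1 hadj
    · intro D hD
      simp only [Finset.mem_filter, Finset.mem_univ, true_and] at hD
      obtain ⟨hTDS, hu, hnPc⟩ := hD
      obtain ⟨w, hwD, hw, huniq1, huniq2⟩ := structC G u D hTDS hu hnPc
      have hk : keyv G u D = w := keyv_eq G u D w hwD hw huniq1
      dsimp only
      rw [hk, Finset.insert_erase (Finset.mem_erase.mpr ⟨hw.ne', hwD⟩),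
        Finset.insert_erase hu]
    · rintro ⟨w, S⟩ hp
      rw [Finset.mem_sigma] at hp
      obtain ⟨hwmem, hS⟩ := hp
      simp only [Finset.mem_filter, Finset.mem_univ, true_and] at hwmem hS
      obtain ⟨hsub, hdom⟩ := hS
      have huS : u ∉ S := fun hu => ((mem_cpl G u w u).mp (hsub u hu)).2.1 rfl
      have hwS : w ∉ S := fun hws => ((mem_cpl G u w w).mp (hsub w hws)).2.2.2 rfl
      have huI : u ∉ insert w S := by
        simp only [Finset.mem_insert]
        rintro (e | e)
        exacts [hwmem.ne e, huS e]
      dsimp only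
      have hk : keyv G u (insert u (insert w S)) = w := by
        refine keyv_eq G u _ w
          (Finset.mem_insert_of_mem (Finset.mem_insert_self w S)) hwmem ?_
        intro y hy hadj
        rcases Finset.mem_insert.mp hy with e | hy'
        · exact absurd (e ▸ hadj) (G.irrefl)
        rcases Finset.mem_insert.mp hy' with e | hyS
        · exact e
        · exact absurd hadj ((mem_cpl G u w y).mp (hsub y hyS)).1
      rw [hk, Finset.erase_insert huI, Finset.erase_insert hwS]
    · intro D hD
      simp only [Finset.mem_filter, Finset.mem_univ, true_and] at hD
      obtain ⟨hTDS, hu, hnPc⟩ := hD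
      obtain ⟨w, hwD, hw, huniq1, huniq2⟩ := structC G u D hTDS hu hnPc
      have hk : keyv G u D = w := keyv_eq G u D w hwD hw huniq1
      dsimp only
      rw [hk]
      have hwE : w ∈ D.erase u := Finset.mem_erase.mpr ⟨hw.ne', hwD⟩
      rw [← Finset.card_erase_add_one hu, ← Finset.card_erase_add_one hwE]
  rw [key, Finset.sum_sigma]
  refine Finset.sum_congr rfl fun w hw => ?_
  dsimp only
  exact (hrw w hw).symm

end main

open scoped Classical in
theorem tdPoly_rec_of_closed_nbhd_subset {V : Type*} [Fintype V] (G : SimpleGraph V)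
    (u v : V) (huv : G.Adj u v)
    (h : G.neighborSet v ∪ {v} ⊆ G.neighborSet u ∪ {u}) :
    tdPoly G = tdPoly (G.induce {x : V | x ≠ u}) + X * tdPoly (contract G u) +
      X ^ 2 * ∑ w ∈ Finset.univ.filter (fun w : V => G.Adj u w),
        tdPoly (G.induce (((G.neighborSet u ∪ {u}) ∪ (G.neighborSet w ∪ {w}))ᶜ)) := by
  rw [tdPoly_eq G]
  rw [← Finset.sum_filter_add_sum_filter_not (Finset.univ.filter (isTDS G))
    (fun D => u ∈ D) (fun D => (X : Polynomial ℤ) ^ D.card)]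
  rw [← Finset.sum_filter_add_sum_filter_not
    ((Finset.univ.filter (isTDS G)).filter (fun D => u ∈ D))
    (fun D => Pc G u (D.erase u)) (fun D => (X : Polynomial ℤ) ^ D.card)]
  have e1 : (Finset.univ.filter (isTDS G)).filter (fun D => ¬ u ∈ D)
      = Finset.univ.filter (fun D : Finset V => isTDS G D ∧ u ∉ D) := by
    ext D
    simp only [Finset.mem_filter, Finset.mem_univ, true_and]
  have e2 : ((Finset.univ.filter (isTDS G)).filter (fun D => u ∈ D)).filter
        (fun D => Pc G u (D.erase u))
      = Finset.univ.filter (fun D : Finset V => isTDS G D ∧ u ∈ D ∧ Pc G u (D.erase u)) := by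
    ext D
    simp only [Finset.mem_filter, Finset.mem_univ, true_and]
    tauto
  have e3 : ((Finset.univ.filter (isTDS G)).filter (fun D => u ∈ D)).filter
        (fun D => ¬ Pc G u (D.erase u))
      = Finset.univ.filter
          (fun D : Finset V => isTDS G D ∧ u ∈ D ∧ ¬ Pc G u (D.erase u)) := by
    ext D
    simp only [Finset.mem_filter, Finset.mem_univ, true_and]
    tauto
  rw [e1, e2, e3, sumA G u v huv h, sumB G u v huv h, sumC G u]
  ring
end

section
/- For n ≥ 2, the total domination polynomial of the graph G_n (chain triangular cactus T_n with a pendant vertex attached at the last cut-vertex) satisfies D_t(G_n,x) = (x+1)[D_t(T_n,x) − D_t(G_{n-1},x)] + x^2 D_t(G_{n-2},x), with D_t(G_0,x) = x^2, D_t(G_1,x) = x^4 + 3x^3 + 3x^2, and D_t(T_2,x) = x^5 + 5x^4 + 6x^3 + 4x^2. -/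
open Polynomial Finset

/-- The chain triangular cactus T_n : triangles on spine vertices u_0,...,u_n (first summand)
with apexes w_1,...,w_n (second summand); triangle i is u_{i-1}, u_i, w_i. -/
def triChain (n : ℕ) : SimpleGraph (Fin (n + 1) ⊕ Fin n) :=
  SimpleGraph.fromRel (fun a b =>
    (∃ i : Fin n, a = .inl i.castSucc ∧ b = .inl i.succ) ∨
    (∃ i : Fin n, a = .inl i.castSucc ∧ b = .inr i) ∨
    (∃ i : Fin n, a = .inl i.succ ∧ b = .inr i))

/-- G_n : the chain triangular cactus T_n with one pendant vertex attached at the last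
cut-vertex u_n. -/
def triChainPendant (n : ℕ) : SimpleGraph ((Fin (n + 1) ⊕ Fin n) ⊕ Unit) :=
  SimpleGraph.fromRel (fun a b =>
    (∃ x y, a = .inl x ∧ b = .inl y ∧ (triChain n).Adj x y) ∨
    (a = .inl (.inl (Fin.last n)) ∧ b = .inr ()))

instance isTDS.dec {V : Type*} [Fintype V] (G : SimpleGraph V) [DecidableRel G.Adj] :
    DecidablePred (isTDS G) := fun D =>
  inferInstanceAs (Decidable (∀ v, ∃ u ∈ D, G.Adj v u))

lemma tdPoly_def {V : Type*} [Fintype V] (G : SimpleGraph V) [DecidablePred (isTDS G)] :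
    tdPoly G = ∑ D ∈ Finset.univ.filter (isTDS G), X ^ D.card := by
  unfold tdPoly
  congr!

instance fromRel.decAdj {V : Type*} [DecidableEq V] (r : V → V → Prop) [DecidableRel r] :
    DecidableRel (SimpleGraph.fromRel r).Adj := fun a b =>
  decidable_of_iff _ (SimpleGraph.fromRel_adj r a b).symm

instance triChain.decAdj (n : ℕ) : DecidableRel (triChain n).Adj := fun a b =>
  decidable_of_iff _ (SimpleGraph.fromRel_adj _ a b).symm

instance triChainPendant.decAdj (n : ℕ) : DecidableRel (triChainPendant n).Adj := fun a b =>
  decidable_of_iff _ (SimpleGraph.fromRel_adj _ a b).symm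

lemma tdPoly_counts {V : Type*} [Fintype V] [DecidableEq V] (G : SimpleGraph V)
    [DecidablePred (isTDS G)] :
    tdPoly G = ∑ k ∈ Finset.range (Fintype.card V + 1),
      ((Finset.univ.filter (fun D : Finset V => isTDS G D ∧ D.card = k)).card : ℤ) • X ^ k := by
  rw [tdPoly_def]
  rw [← Finset.sum_fiberwise_of_maps_to (g := Finset.card)
    (t := Finset.range (Fintype.card V + 1))
    (fun D _ => Finset.mem_range.mpr (Nat.lt_succ_of_le (D.card_le_univ.trans_eq rfl)))]
  refine Finset.sum_congr rfl fun k _ => ?_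
  rw [Finset.filter_filter]
  rw [Finset.sum_congr rfl (fun D hD => by
    rw [(Finset.mem_filter.mp hD).2.2]), Finset.sum_const, nsmul_eq_mul, zsmul_eq_mul]
  push_cast; ring

lemma triChain_adj_inl_inl (n : ℕ) (i j : Fin (n+1)) :
    (triChain n).Adj (.inl i) (.inl j) ↔ (i.val + 1 = j.val ∨ j.val + 1 = i.val) := by
  simp only [triChain, SimpleGraph.fromRel_adj, Sum.inl.injEq, ne_eq, reduceCtorEq,
    and_false, false_and, exists_false, or_false, false_or, Fin.exists_iff, Fin.ext_iff,
    Fin.coe_castSucc, Fin.val_succ]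
  constructor
  · rintro ⟨hne, ⟨k, hk, h1, h2⟩ | ⟨k, hk, h1, h2⟩⟩ <;> omega
  · intro h
    refine ⟨by omega, ?_⟩
    rcases h with h | h
    · exact Or.inl ⟨i.val, by omega, rfl, by omega⟩
    · exact Or.inr ⟨j.val, by omega, rfl, by omega⟩

lemma triChain_adj_inl_inr (n : ℕ) (i : Fin (n+1)) (j : Fin n) :
    (triChain n).Adj (.inl i) (.inr j) ↔ (i.val = j.val ∨ i.val = j.val + 1) := by
  simp only [triChain, SimpleGraph.fromRel_adj, Sum.inl.injEq, Sum.inr.injEq, ne_eq,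
    reduceCtorEq, and_false, false_and, exists_false, or_false, false_or, not_false_iff,
    true_and, Fin.exists_iff, Fin.ext_iff, Fin.coe_castSucc, Fin.val_succ]
  constructor
  · rintro (⟨k, hk, h1, h2⟩ | ⟨k, hk, h1, h2⟩) <;> omega
  · intro h
    rcases h with h | h
    · exact Or.inl ⟨j.val, j.isLt, by omega, rfl⟩
    · exact Or.inr ⟨j.val, j.isLt, by omega, rfl⟩

lemma triChain_adj_inr_inl (n : ℕ) (j : Fin n) (i : Fin (n+1)) :
    (triChain n).Adj (.inr j) (.inl i) ↔ (i.val = j.val ∨ i.val = j.val + 1) := by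
  rw [SimpleGraph.adj_comm, triChain_adj_inl_inr]

lemma triChain_adj_inr_inr (n : ℕ) (j k : Fin n) :
    ¬ (triChain n).Adj (.inr j) (.inr k) := by
  simp [triChain, SimpleGraph.fromRel_adj]

lemma pend_adj_inl_inl (n : ℕ) (x y : Fin (n+1) ⊕ Fin n) :
    (triChainPendant n).Adj (.inl x) (.inl y) ↔ (triChain n).Adj x y := by
  simp only [triChainPendant, SimpleGraph.fromRel_adj, Sum.inl.injEq, ne_eq, reduceCtorEq,
    and_false, false_and, exists_false, or_false, false_or, exists_and_left, exists_eq_left']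
  constructor
  · rintro ⟨hne, h | h⟩
    · exact h
    · exact h.symm
  · intro h
    exact ⟨fun he => h.ne (by exact he), Or.inl h⟩

lemma pend_adj_inl_inr (n : ℕ) (x : Fin (n+1) ⊕ Fin n) (u : Unit) :
    (triChainPendant n).Adj (.inl x) (.inr u) ↔ x = .inl (Fin.last n) := by
  obtain ⟨⟩ := u
  simp only [triChainPendant, SimpleGraph.fromRel_adj, Sum.inl.injEq, ne_eq, reduceCtorEq,
    and_false, false_and, exists_false, or_false, false_or, and_true, not_false_iff, true_and]

lemma pend_adj_inr_inl (n : ℕ) (u : Unit) (x : Fin (n+1) ⊕ Fin n) :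
    (triChainPendant n).Adj (.inr u) (.inl x) ↔ x = .inl (Fin.last n) := by
  rw [SimpleGraph.adj_comm, pend_adj_inl_inr]

lemma pend_adj_inr_inr (n : ℕ) (u u' : Unit) :
    ¬ (triChainPendant n).Adj (.inr u) (.inr u') := by
  obtain ⟨⟩ := u; obtain ⟨⟩ := u'; simp
def tau (m : ℕ) : (Fin (m+2) ⊕ Fin (m+1)) ⊕ Unit → Fin (m+3) ⊕ Fin (m+2)
  | .inl (.inl i) => .inl i.castSucc
  | .inl (.inr j) => .inr j.castSucc
  | .inr _ => .inr (Fin.last (m+1))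

def rho (m : ℕ) : (Fin (m+1) ⊕ Fin m) ⊕ Unit → (Fin (m+3) ⊕ Fin (m+2)) ⊕ Unit
  | .inl (.inl i) => .inl (.inl (i.castSucc.castSucc))
  | .inl (.inr j) => .inl (.inr (j.castSucc.castSucc))
  | .inr _ => .inl (.inr ((Fin.last m).castSucc))

lemma tau_inj (m : ℕ) : Function.Injective (tau m) := by
  rintro ((i|j)|u) ((i'|j')|u') h <;>
    simp only [tau, Sum.inl.injEq, Sum.inr.injEq, reduceCtorEq, Fin.ext_iff,
      Fin.coe_castSucc, Fin.val_last] at h <;>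
  first
    | (exact congrArg Sum.inr (Subsingleton.elim _ _))
    | (simp only [Sum.inl.injEq, Sum.inr.injEq, Fin.ext_iff, reduceCtorEq]; omega)

lemma rho_inj (m : ℕ) : Function.Injective (rho m) := by
  rintro ((i|j)|u) ((i'|j')|u') h <;>
    simp only [rho, Sum.inl.injEq, Sum.inr.injEq, reduceCtorEq, Fin.ext_iff,
      Fin.coe_castSucc, Fin.val_last] at h <;>
  first
    | (exact congrArg Sum.inr (Subsingleton.elim _ _))
    | (simp only [Sum.inl.injEq, Sum.inr.injEq, Fin.ext_iff, reduceCtorEq]; omega)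

lemma tau_adj (m : ℕ) (x y : (Fin (m+2) ⊕ Fin (m+1)) ⊕ Unit) :
    (triChain (m+2)).Adj (tau m x) (tau m y) ↔ (triChainPendant (m+1)).Adj x y := by
  rcases x with (i|j)|⟨⟩ <;> rcases y with (i'|j')|⟨⟩ <;>
    simp only [tau, pend_adj_inl_inl, pend_adj_inl_inr, pend_adj_inr_inl, pend_adj_inr_inr,
      triChain_adj_inl_inl, triChain_adj_inl_inr, triChain_adj_inr_inl, triChain_adj_inr_inr,
      Fin.coe_castSucc, Fin.val_last, Sum.inl.injEq, Sum.inr.injEq, reduceCtorEq,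
      Fin.ext_iff, iff_false, not_or, iff_self, not_false_iff, SimpleGraph.irrefl,
      iff_true, false_iff, true_iff] <;>
  omega

lemma rho_adj (m : ℕ) (x y : (Fin (m+1) ⊕ Fin m) ⊕ Unit) :
    (triChainPendant (m+2)).Adj (rho m x) (rho m y) ↔ (triChainPendant m).Adj x y := by
  rcases x with (i|j)|⟨⟩ <;> rcases y with (i'|j')|⟨⟩ <;>
    simp only [rho, pend_adj_inl_inl, pend_adj_inl_inr, pend_adj_inr_inl, pend_adj_inr_inr,
      triChain_adj_inl_inl, triChain_adj_inl_inr, triChain_adj_inr_inl, triChain_adj_inr_inr,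
      Fin.coe_castSucc, Fin.val_last, Sum.inl.injEq, Sum.inr.injEq, reduceCtorEq,
      Fin.ext_iff, iff_false, not_or, iff_self, not_false_iff, SimpleGraph.irrefl,
      iff_true, false_iff, true_iff] <;>
  omega

/-! ### Helper lemmas -/

lemma tau_surj (m : ℕ) (x : Fin (m+3) ⊕ Fin (m+2)) (hx : x ≠ .inl (Fin.last (m+2))) :
    ∃ y, tau m y = x := by
  rcases x with i | j
  · have hi : i.val < m + 2 := by
      rcases lt_or_eq_of_le (Nat.lt_succ_iff.mp i.isLt) with h | h
      · exact h
      · exact absurd (by simp [Fin.ext_iff, h]) hx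
    exact ⟨.inl (.inl ⟨i.val, hi⟩), by simp [tau, Fin.ext_iff]⟩
  · rcases Nat.lt_or_ge j.val (m+1) with h | h
    · exact ⟨.inl (.inr ⟨j.val, h⟩), by simp [tau, Fin.ext_iff]⟩
    · have : j.val = m + 1 := by have := j.isLt; omega
      exact ⟨.inr (), by simp [tau, Fin.ext_iff, this]⟩

lemma rho_surj (m : ℕ) (x : (Fin (m+3) ⊕ Fin (m+2)) ⊕ Unit)
    (h1 : x ≠ .inr ())
    (h2 : x ≠ .inl (.inl (Fin.last (m+2))))
    (h3 : x ≠ .inl (.inl ((Fin.last (m+1)).castSucc)))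
    (h4 : x ≠ .inl (.inr (Fin.last (m+1)))) : ∃ y, rho m y = x := by
  rcases x with (i | j) | u
  · have hi : i.val < m + 1 := by
      have hne2 : i.val ≠ m + 2 := fun h => h2 (by simp [Fin.ext_iff, h])
      have hne1 : i.val ≠ m + 1 := fun h => h3 (by simp [Fin.ext_iff, h])
      have := i.isLt; omega
    exact ⟨.inl (.inl ⟨i.val, hi⟩), by simp [rho, Fin.ext_iff]⟩
  · have hj : j.val ≤ m := by
      have hne : j.val ≠ m + 1 := fun h => h4 (by simp [Fin.ext_iff, h])
      have := j.isLt; omega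
    rcases Nat.lt_or_ge j.val m with h | h
    · exact ⟨.inl (.inr ⟨j.val, h⟩), by simp [rho, Fin.ext_iff]⟩
    · have : j.val = m := by omega
      exact ⟨.inr (), by simp [rho, Fin.ext_iff, this]⟩
  · cases u; exact absurd rfl h1

lemma exists_image_adj {α β : Type*} [DecidableEq β] {G1 : SimpleGraph α} {G2 : SimpleGraph β}
    {g : α → β} (hadj : ∀ x y, G2.Adj (g x) (g y) ↔ G1.Adj x y) (F : Finset α) (v : α) :
    (∃ u ∈ F.image g, G2.Adj (g v) u) ↔ ∃ u ∈ F, G1.Adj v u := by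
  constructor
  · rintro ⟨u, hu, ha⟩
    obtain ⟨y, hy, rfl⟩ := Finset.mem_image.mp hu
    exact ⟨y, hy, (hadj v y).mp ha⟩
  · rintro ⟨y, hy, ha⟩
    exact ⟨g y, Finset.mem_image_of_mem _ hy, (hadj v y).mpr ha⟩

lemma pendant_forces (n : ℕ) (D : Finset ((Fin (n+1) ⊕ Fin n) ⊕ Unit))
    (h : isTDS (triChainPendant n) D) : (Sum.inl (Sum.inl (Fin.last n))) ∈ D := by
  obtain ⟨d, hd, hadj⟩ := h (Sum.inr ())
  rcases d with x | u
  · rwa [(pend_adj_inr_inl n () x).mp hadj] at hd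
  · exact absurd hadj (pend_adj_inr_inr n () u)

lemma tau_ne_last (m : ℕ) (y : (Fin (m+2) ⊕ Fin (m+1)) ⊕ Unit) :
    tau m y ≠ Sum.inl (Fin.last (m+2)) := by
  rcases y with (i|j)|⟨⟩ <;> simp [tau, Fin.ext_iff] <;> omega

lemma S1_eq (m : ℕ) :
    (Finset.univ.filter (fun D : Finset ((Fin (m+3) ⊕ Fin (m+2)) ⊕ Unit) =>
        isTDS (triChainPendant (m+2)) D ∧ (Sum.inr () : (Fin (m+3) ⊕ Fin (m+2)) ⊕ Unit) ∉ D))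
    = (Finset.univ.filter (fun E : Finset (Fin (m+3) ⊕ Fin (m+2)) =>
        isTDS (triChain (m+2)) E ∧ Sum.inl (Fin.last (m+2)) ∈ E)).image
        (fun E => E.image Sum.inl) := by
  ext D
  simp only [Finset.mem_filter, Finset.mem_univ, true_and, Finset.mem_image]
  constructor
  · rintro ⟨hT, hp⟩
    refine ⟨D.preimage Sum.inl Sum.inl_injective.injOn, ⟨?_, ?_⟩, ?_⟩
    · intro v
      obtain ⟨d, hd, hadj⟩ := hT (Sum.inl v)
      rcases d with y | u
      · exact ⟨y, Finset.mem_preimage.mpr hd, (pend_adj_inl_inl _ _ _).mp hadj⟩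
      · cases u; exact absurd hd hp
    · exact Finset.mem_preimage.mpr (pendant_forces _ _ hT)
    · rw [Finset.image_preimage]
      apply Finset.filter_true_of_mem
      intro d hd
      rcases d with y | u
      · exact ⟨y, rfl⟩
      · cases u; exact absurd hd hp
  · rintro ⟨E, ⟨hE, huE⟩, rfl⟩
    refine ⟨?_, by simp⟩
    intro v
    rcases v with x | u
    · obtain ⟨y, hy, ha⟩ := hE x
      exact ⟨Sum.inl y, Finset.mem_image_of_mem _ hy, (pend_adj_inl_inl _ _ _).mpr ha⟩
    · exact ⟨Sum.inl (.inl (Fin.last _)), Finset.mem_image_of_mem _ huE,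
        (pend_adj_inr_inl _ _ _).mpr rfl⟩

lemma B_eq (m : ℕ) :
    (Finset.univ.filter (fun E : Finset (Fin (m+3) ⊕ Fin (m+2)) =>
        isTDS (triChain (m+2)) E ∧ Sum.inl (Fin.last (m+2)) ∉ E))
    = (Finset.univ.filter (fun F : Finset ((Fin (m+2) ⊕ Fin (m+1)) ⊕ Unit) =>
        isTDS (triChainPendant (m+1)) F)).image (fun F => F.image (tau m)) := by
  ext E
  simp only [Finset.mem_filter, Finset.mem_univ, true_and, Finset.mem_image]
  constructor
  · rintro ⟨hE, hu⟩
    refine ⟨E.preimage (tau m) (tau_inj m).injOn, ?_, ?_⟩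
    · intro x
      obtain ⟨d, hd, hadj⟩ := hE (tau m x)
      have hd' : d ≠ Sum.inl (Fin.last (m+2)) := fun h => hu (h ▸ hd)
      obtain ⟨y, rfl⟩ := tau_surj m d hd'
      exact ⟨y, Finset.mem_preimage.mpr hd, (tau_adj m x y).mp hadj⟩
    · rw [Finset.image_preimage]
      apply Finset.filter_true_of_mem
      intro d hd
      have hd' : d ≠ Sum.inl (Fin.last (m+2)) := fun h => hu (h ▸ hd)
      obtain ⟨y, rfl⟩ := tau_surj m d hd'
      exact ⟨y, rfl⟩
  · rintro ⟨F, hF, rfl⟩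
    constructor
    · intro v
      by_cases hv : v = Sum.inl (Fin.last (m+2))
      · subst hv
        obtain ⟨d, hd, hadj⟩ := hF (Sum.inr ())
        rcases d with x | u
        · rw [pend_adj_inr_inl] at hadj
          subst hadj
          refine ⟨tau m (Sum.inl (Sum.inl (Fin.last (m+1)))), Finset.mem_image_of_mem _ hd, ?_⟩
          show (triChain (m+2)).Adj (Sum.inl (Fin.last (m+2))) (Sum.inl ((Fin.last (m+1)).castSucc))
          rw [triChain_adj_inl_inl]
          simp
        · exact absurd hadj (pend_adj_inr_inr _ _ _)
      · obtain ⟨y, rfl⟩ := tau_surj m v hv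
        obtain ⟨z, hz, ha⟩ := hF y
        exact ⟨tau m z, Finset.mem_image_of_mem _ hz, (tau_adj m y z).mpr ha⟩
    · intro hmem
      obtain ⟨y, _, hy⟩ := Finset.mem_image.mp hmem
      exact tau_ne_last m y hy

/-- The last cut vertex is dominated from within the chain part. -/
def lastDom (m : ℕ) (D : Finset ((Fin (m+3) ⊕ Fin (m+2)) ⊕ Unit)) : Prop :=
  ∃ y, Sum.inl y ∈ D ∧ (triChain (m+2)).Adj (Sum.inl (Fin.last (m+2))) y

instance lastDom.dec (m : ℕ) : DecidablePred (lastDom m) := fun D => by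
  unfold lastDom; infer_instance

lemma S2_eq (m : ℕ) :
    (Finset.univ.filter (fun D : Finset ((Fin (m+3) ⊕ Fin (m+2)) ⊕ Unit) =>
        (isTDS (triChainPendant (m+2)) D ∧ (Sum.inr () : (Fin (m+3) ⊕ Fin (m+2)) ⊕ Unit) ∈ D) ∧ lastDom m D))
    = (Finset.univ.filter (fun E : Finset (Fin (m+3) ⊕ Fin (m+2)) =>
        isTDS (triChain (m+2)) E ∧ Sum.inl (Fin.last (m+2)) ∈ E)).image
        (fun E => insert (Sum.inr ()) (E.image Sum.inl)) := by
  ext D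
  simp only [Finset.mem_filter, Finset.mem_univ, true_and, Finset.mem_image]
  constructor
  · rintro ⟨⟨hT, hp⟩, hC⟩
    refine ⟨(D.erase (Sum.inr ())).preimage Sum.inl Sum.inl_injective.injOn, ⟨?_, ?_⟩, ?_⟩
    · intro v
      by_cases hv : v = Sum.inl (Fin.last (m+2))
      · subst hv
        obtain ⟨y, hy, ha⟩ := hC
        refine ⟨y, Finset.mem_preimage.mpr (Finset.mem_erase.mpr ⟨by simp, hy⟩), ha⟩
      · obtain ⟨d, hd, hadj⟩ := hT (Sum.inl v)
        rcases d with y | u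
        · exact ⟨y, Finset.mem_preimage.mpr (Finset.mem_erase.mpr ⟨by simp, hd⟩),
            (pend_adj_inl_inl _ _ _).mp hadj⟩
        · cases u
          rw [pend_adj_inl_inr] at hadj
          exact absurd hadj hv
    · exact Finset.mem_preimage.mpr
        (Finset.mem_erase.mpr ⟨by simp, pendant_forces _ _ hT⟩)
    · have hcl : ∀ d ∈ D.erase (Sum.inr ()), d ∈ Set.range Sum.inl := by
        intro d hd
        rcases d with y | u
        · exact ⟨y, rfl⟩
        · cases u; exact absurd (Finset.mem_erase.mp hd).1 (by simp)
      rw [Finset.image_preimage, Finset.filter_true_of_mem hcl, Finset.insert_erase hp]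
  · rintro ⟨E, ⟨hE, huE⟩, rfl⟩
    refine ⟨⟨?_, Finset.mem_insert_self _ _⟩, ?_⟩
    · intro v
      rcases v with x | u
      · by_cases hx : x = Sum.inl (Fin.last (m+2))
        · subst hx
          exact ⟨Sum.inr (), Finset.mem_insert_self _ _, (pend_adj_inl_inr _ _ _).mpr rfl⟩
        · obtain ⟨y, hy, ha⟩ := hE x
          exact ⟨Sum.inl y, Finset.mem_insert_of_mem (Finset.mem_image_of_mem _ hy),
            (pend_adj_inl_inl _ _ _).mpr ha⟩
      · exact ⟨Sum.inl (.inl (Fin.last _)),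
          Finset.mem_insert_of_mem (Finset.mem_image_of_mem _ huE),
          (pend_adj_inr_inl _ _ _).mpr rfl⟩
    · obtain ⟨y, hy, ha⟩ := hE (Sum.inl (Fin.last (m+2)))
      exact ⟨y, Finset.mem_insert_of_mem (Finset.mem_image_of_mem _ hy), ha⟩

lemma rho_ne_p (m : ℕ) (y : (Fin (m+1) ⊕ Fin m) ⊕ Unit) (u : Unit) :
    rho m y ≠ Sum.inr u := by
  rcases y with (i|j)|⟨⟩ <;> simp [rho]

lemma rho_ne_last (m : ℕ) (y : (Fin (m+1) ⊕ Fin m) ⊕ Unit) :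
    rho m y ≠ Sum.inl (Sum.inl (Fin.last (m+2))) := by
  rcases y with (i|j)|⟨⟩ <;> simp [rho, Fin.ext_iff] <;> omega

lemma rho_not_adj_p (m : ℕ) (x : (Fin (m+1) ⊕ Fin m) ⊕ Unit) :
    ¬ (triChainPendant (m+2)).Adj (rho m x) (Sum.inr ()) := by
  rcases x with (i|j)|⟨⟩ <;>
    simp [rho, pend_adj_inl_inr, Fin.ext_iff] <;> omega

lemma rho_not_adj_last (m : ℕ) (x : (Fin (m+1) ⊕ Fin m) ⊕ Unit) :
    ¬ (triChainPendant (m+2)).Adj (rho m x) (Sum.inl (Sum.inl (Fin.last (m+2)))) := by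
  rcases x with (i|j)|⟨⟩ <;>
    simp only [rho, pend_adj_inl_inl, triChain_adj_inl_inl, triChain_adj_inr_inl,
      Fin.coe_castSucc, Fin.val_last] <;>
    omega

lemma adj_last_uprev (m : ℕ) :
    (triChain (m+2)).Adj (Sum.inl (Fin.last (m+2))) (Sum.inl ((Fin.last (m+1)).castSucc)) := by
  rw [triChain_adj_inl_inl]; simp

lemma adj_last_wlast (m : ℕ) :
    (triChain (m+2)).Adj (Sum.inl (Fin.last (m+2))) (Sum.inr (Fin.last (m+1))) := by
  rw [triChain_adj_inl_inr]; simp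

lemma S3_eq (m : ℕ) :
    (Finset.univ.filter (fun D : Finset ((Fin (m+3) ⊕ Fin (m+2)) ⊕ Unit) =>
        (isTDS (triChainPendant (m+2)) D ∧
          (Sum.inr () : (Fin (m+3) ⊕ Fin (m+2)) ⊕ Unit) ∈ D) ∧ ¬ lastDom m D))
    = (Finset.univ.filter (fun F : Finset ((Fin (m+1) ⊕ Fin m) ⊕ Unit) =>
        isTDS (triChainPendant m) F)).image
        (fun F => insert (Sum.inr ())
          (insert (Sum.inl (Sum.inl (Fin.last (m+2)))) (F.image (rho m)))) := by
  ext D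
  simp only [Finset.mem_filter, Finset.mem_univ, true_and, Finset.mem_image]
  constructor
  · rintro ⟨⟨hT, hp⟩, hC⟩
    have huL : Sum.inl (Sum.inl (Fin.last (m+2))) ∈ D := pendant_forces _ _ hT
    have hex1 : Sum.inl (Sum.inl ((Fin.last (m+1)).castSucc)) ∉ D := by
      intro h
      exact hC ⟨Sum.inl ((Fin.last (m+1)).castSucc), h, adj_last_uprev m⟩
    have hex2 : Sum.inl (Sum.inr (Fin.last (m+1))) ∉ D := by
      intro h
      exact hC ⟨Sum.inr (Fin.last (m+1)), h, adj_last_wlast m⟩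
    set F := ((D.erase (Sum.inr ())).erase (Sum.inl (Sum.inl (Fin.last (m+2))))).preimage
      (rho m) (rho_inj m).injOn with hFdef
    have hmemF : ∀ y, y ∈ F ↔ rho m y ∈ D := by
      intro y
      rw [hFdef, Finset.mem_preimage, Finset.mem_erase, Finset.mem_erase]
      exact ⟨fun h => h.2.2, fun h => ⟨rho_ne_last m y, rho_ne_p m y (), h⟩⟩
    have hDeq : D = insert (Sum.inr ())
        (insert (Sum.inl (Sum.inl (Fin.last (m+2)))) (F.image (rho m))) := by
      ext d
      simp only [Finset.mem_insert, Finset.mem_image]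
      constructor
      · intro hd
        by_cases h1 : d = Sum.inr ()
        · exact Or.inl h1
        by_cases h2 : d = Sum.inl (Sum.inl (Fin.last (m+2)))
        · exact Or.inr (Or.inl h2)
        have h3 : d ≠ Sum.inl (Sum.inl ((Fin.last (m+1)).castSucc)) := fun h => hex1 (h ▸ hd)
        have h4 : d ≠ Sum.inl (Sum.inr (Fin.last (m+1))) := fun h => hex2 (h ▸ hd)
        obtain ⟨y, rfl⟩ := rho_surj m d h1 h2 h3 h4
        exact Or.inr (Or.inr ⟨y, (hmemF y).mpr hd, rfl⟩)
      · rintro (rfl | rfl | ⟨y, hy, rfl⟩)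
        · exact hp
        · exact huL
        · exact (hmemF y).mp hy
    refine ⟨F, ?_, hDeq.symm⟩
    intro x
    obtain ⟨d, hd, hadj⟩ := hT (rho m x)
    have h1 : d ≠ Sum.inr () := by
      rintro rfl; exact rho_not_adj_p m x hadj
    have h2 : d ≠ Sum.inl (Sum.inl (Fin.last (m+2))) := by
      rintro rfl; exact rho_not_adj_last m x hadj
    have h3 : d ≠ Sum.inl (Sum.inl ((Fin.last (m+1)).castSucc)) := fun h => hex1 (h ▸ hd)
    have h4 : d ≠ Sum.inl (Sum.inr (Fin.last (m+1))) := fun h => hex2 (h ▸ hd)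
    obtain ⟨y, rfl⟩ := rho_surj m d h1 h2 h3 h4
    exact ⟨y, (hmemF y).mpr hd, (rho_adj m x y).mp hadj⟩
  · rintro ⟨F, hF, rfl⟩
    refine ⟨⟨?_, Finset.mem_insert_self _ _⟩, ?_⟩
    · intro v
      by_cases hv1 : v = Sum.inr ()
      · subst hv1
        exact ⟨Sum.inl (Sum.inl (Fin.last (m+2))),
          Finset.mem_insert_of_mem (Finset.mem_insert_self _ _),
          (pend_adj_inr_inl _ _ _).mpr rfl⟩
      by_cases hv2 : v = Sum.inl (Sum.inl (Fin.last (m+2)))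
      · subst hv2
        exact ⟨Sum.inr (), Finset.mem_insert_self _ _, (pend_adj_inl_inr _ _ _).mpr rfl⟩
      by_cases hv3 : v = Sum.inl (Sum.inl ((Fin.last (m+1)).castSucc))
      · subst hv3
        refine ⟨Sum.inl (Sum.inl (Fin.last (m+2))),
          Finset.mem_insert_of_mem (Finset.mem_insert_self _ _), ?_⟩
        rw [pend_adj_inl_inl, triChain_adj_inl_inl]
        simp
      by_cases hv4 : v = Sum.inl (Sum.inr (Fin.last (m+1)))
      · subst hv4
        refine ⟨Sum.inl (Sum.inl (Fin.last (m+2))),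
          Finset.mem_insert_of_mem (Finset.mem_insert_self _ _), ?_⟩
        rw [pend_adj_inl_inl, triChain_adj_inr_inl]
        simp
      · obtain ⟨x, rfl⟩ := rho_surj m v hv1 hv2 hv3 hv4
        obtain ⟨y, hy, ha⟩ := hF x
        exact ⟨rho m y,
          Finset.mem_insert_of_mem (Finset.mem_insert_of_mem (Finset.mem_image_of_mem _ hy)),
          (rho_adj m x y).mpr ha⟩
    · rintro ⟨y, hy, hadj⟩
      simp only [Finset.mem_insert, Finset.mem_image] at hy
      rcases hy with hy | hy | ⟨z, hz, hzy⟩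
      · exact absurd hy (by simp)
      · rw [Sum.inl.injEq] at hy
        subst hy
        exact (triChain (m+2)).irrefl hadj
      · apply rho_not_adj_last m z
        rw [hzy]
        exact (pend_adj_inl_inl _ _ _).mpr hadj.symm

lemma main_rec (m : ℕ) :
    tdPoly (triChainPendant (m+2)) =
      (X + 1) * (tdPoly (triChain (m+2)) - tdPoly (triChainPendant (m+1))) +
        X ^ 2 * tdPoly (triChainPendant m) := by
  rw [tdPoly_def, tdPoly_def, tdPoly_def, tdPoly_def]
  -- split the left sum by membership of the pendant vertex and lastDom
  rw [← Finset.sum_filter_add_sum_filter_not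
      (Finset.univ.filter (isTDS (triChainPendant (m+2))))
      (fun D => (Sum.inr () : (Fin (m+3) ⊕ Fin (m+2)) ⊕ Unit) ∈ D)]
  rw [← Finset.sum_filter_add_sum_filter_not
      ((Finset.univ.filter (isTDS (triChainPendant (m+2)))).filter
        (fun D => (Sum.inr () : (Fin (m+3) ⊕ Fin (m+2)) ⊕ Unit) ∈ D))
      (fun D => lastDom m D)]
  simp only [Finset.filter_filter]
  -- split the T sum by membership of the last cut vertex
  rw [← Finset.sum_filter_add_sum_filter_not
      (Finset.univ.filter (isTDS (triChain (m+2))))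
      (fun E => (Sum.inl (Fin.last (m+2)) : Fin (m+3) ⊕ Fin (m+2)) ∈ E)]
  simp only [Finset.filter_filter]
  rw [S1_eq m, S2_eq m, S3_eq m, B_eq m]
  -- evaluate the image sums
  have hinj1 : ∀ E ∈ (Finset.univ.filter (fun E : Finset (Fin (m+3) ⊕ Fin (m+2)) =>
        isTDS (triChain (m+2)) E ∧ Sum.inl (Fin.last (m+2)) ∈ E)),
      ∀ E' ∈ (Finset.univ.filter (fun E : Finset (Fin (m+3) ⊕ Fin (m+2)) =>
        isTDS (triChain (m+2)) E ∧ Sum.inl (Fin.last (m+2)) ∈ E)),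
      (E.image (Sum.inl : _ → (Fin (m+3) ⊕ Fin (m+2)) ⊕ Unit))
        = E'.image (Sum.inl : _ → (Fin (m+3) ⊕ Fin (m+2)) ⊕ Unit) → E = E' :=
    fun E _ E' _ h => Finset.image_injective Sum.inl_injective h
  have hinj2 : ∀ E ∈ (Finset.univ.filter (fun E : Finset (Fin (m+3) ⊕ Fin (m+2)) =>
        isTDS (triChain (m+2)) E ∧ Sum.inl (Fin.last (m+2)) ∈ E)),
      ∀ E' ∈ (Finset.univ.filter (fun E : Finset (Fin (m+3) ⊕ Fin (m+2)) =>
        isTDS (triChain (m+2)) E ∧ Sum.inl (Fin.last (m+2)) ∈ E)),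
      insert (Sum.inr ()) (E.image (Sum.inl : _ → (Fin (m+3) ⊕ Fin (m+2)) ⊕ Unit))
        = insert (Sum.inr ()) (E'.image (Sum.inl : _ → (Fin (m+3) ⊕ Fin (m+2)) ⊕ Unit))
        → E = E' := by
    intro E _ E' _ h
    have hp : (Sum.inr () : (Fin (m+3) ⊕ Fin (m+2)) ⊕ Unit)
        ∉ E.image (Sum.inl : _ → (Fin (m+3) ⊕ Fin (m+2)) ⊕ Unit) := by simp
    have hp' : (Sum.inr () : (Fin (m+3) ⊕ Fin (m+2)) ⊕ Unit)
        ∉ E'.image (Sum.inl : _ → (Fin (m+3) ⊕ Fin (m+2)) ⊕ Unit) := by simp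
    refine Finset.image_injective
      (f := (Sum.inl : Fin (m+3) ⊕ Fin (m+2) → (Fin (m+3) ⊕ Fin (m+2)) ⊕ Unit))
      Sum.inl_injective ?_
    rw [← Finset.erase_insert hp, ← Finset.erase_insert hp', h]
  have hpnot : ∀ (F : Finset ((Fin (m+1) ⊕ Fin m) ⊕ Unit)),
      (Sum.inr () : (Fin (m+3) ⊕ Fin (m+2)) ⊕ Unit) ∉
        insert (Sum.inl (Sum.inl (Fin.last (m+2)))) (F.image (rho m)) := by
    intro F
    simp only [Finset.mem_insert, Finset.mem_image, not_or]
    exact ⟨by simp, by rintro ⟨y, hy, hE⟩; exact rho_ne_p m y () hE⟩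
  have huL : ∀ (F : Finset ((Fin (m+1) ⊕ Fin m) ⊕ Unit)),
      (Sum.inl (Sum.inl (Fin.last (m+2))) : (Fin (m+3) ⊕ Fin (m+2)) ⊕ Unit) ∉
        F.image (rho m) := by
    intro F
    simp only [Finset.mem_image, not_exists, not_and]
    exact fun y _ => rho_ne_last m y
  have hinj3 : ∀ F ∈ (Finset.univ.filter (fun F : Finset ((Fin (m+1) ⊕ Fin m) ⊕ Unit) =>
        isTDS (triChainPendant m) F)),
      ∀ F' ∈ (Finset.univ.filter (fun F : Finset ((Fin (m+1) ⊕ Fin m) ⊕ Unit) =>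
        isTDS (triChainPendant m) F)),
      insert (Sum.inr ()) (insert (Sum.inl (Sum.inl (Fin.last (m+2)))) (F.image (rho m)))
        = insert (Sum.inr ()) (insert (Sum.inl (Sum.inl (Fin.last (m+2)))) (F'.image (rho m)))
        → F = F' := by
    intro F _ F' _ h
    have e1 : insert (Sum.inl (Sum.inl (Fin.last (m+2)))) (F.image (rho m))
        = insert (Sum.inl (Sum.inl (Fin.last (m+2)))) (F'.image (rho m)) := by
      rw [← Finset.erase_insert (hpnot F), ← Finset.erase_insert (hpnot F'), h]
    have e2 := congrArg (fun s => s.erase (Sum.inl (Sum.inl (Fin.last (m+2))))) e1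
    simp only [Finset.erase_insert (huL F), Finset.erase_insert (huL F')] at e2
    exact Finset.image_injective (rho_inj m) e2
  have hinj4 : ∀ F ∈ (Finset.univ.filter (fun F : Finset ((Fin (m+2) ⊕ Fin (m+1)) ⊕ Unit) =>
        isTDS (triChainPendant (m+1)) F)),
      ∀ F' ∈ (Finset.univ.filter (fun F : Finset ((Fin (m+2) ⊕ Fin (m+1)) ⊕ Unit) =>
        isTDS (triChainPendant (m+1)) F)),
      F.image (tau m) = F'.image (tau m) → F = F' :=
    fun F _ F' _ h => Finset.image_injective (tau_inj m) h
  rw [Finset.sum_image hinj1, Finset.sum_image hinj2, Finset.sum_image hinj3,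
    Finset.sum_image hinj4]
  -- compute cardinalities
  have c1 : ∀ E : Finset (Fin (m+3) ⊕ Fin (m+2)),
      (E.image (Sum.inl : _ → (Fin (m+3) ⊕ Fin (m+2)) ⊕ Unit)).card = E.card :=
    fun E => Finset.card_image_of_injective _ Sum.inl_injective
  have c2 : ∀ E : Finset (Fin (m+3) ⊕ Fin (m+2)),
      (insert (Sum.inr ()) (E.image Sum.inl) : Finset ((Fin (m+3) ⊕ Fin (m+2)) ⊕ Unit)).card
        = E.card + 1 := by
    intro E
    rw [Finset.card_insert_of_notMem (by simp), c1]
  have c3 : ∀ F : Finset ((Fin (m+1) ⊕ Fin m) ⊕ Unit),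
      (insert (Sum.inr ()) (insert (Sum.inl (Sum.inl (Fin.last (m+2)))) (F.image (rho m)))).card
        = F.card + 2 := by
    intro F
    rw [Finset.card_insert_of_notMem, Finset.card_insert_of_notMem,
      Finset.card_image_of_injective _ (rho_inj m)]
    · simp only [Finset.mem_image, not_exists, not_and]
      exact fun y _ => rho_ne_last m y
    · simp only [Finset.mem_insert, Finset.mem_image, not_or]
      exact ⟨by simp, by rintro ⟨y, hy, hE⟩; exact rho_ne_p m y () hE⟩
  have c4 : ∀ F : Finset ((Fin (m+2) ⊕ Fin (m+1)) ⊕ Unit),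
      (F.image (tau m)).card = F.card :=
    fun F => Finset.card_image_of_injective _ (tau_inj m)
  simp only [c1, c2, c3, c4, pow_succ, pow_add]
  rw [← Finset.sum_mul, ← Finset.sum_mul, ← Finset.sum_mul]
  ring

set_option maxRecDepth 10000 in
lemma base0 : tdPoly (triChainPendant 0) = X ^ 2 := by
  rw [tdPoly_counts]
  have h0 : #(Finset.filter (fun D : Finset ((Fin 1 ⊕ Fin 0) ⊕ Unit) => isTDS (triChainPendant 0) D ∧ D = ∅) Finset.univ) = 0 := by decide
  have h1 : #(Finset.filter (fun D : Finset ((Fin 1 ⊕ Fin 0) ⊕ Unit) => isTDS (triChainPendant 0) D ∧ #D = 1) Finset.univ) = 0 := by decide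
  have h2 : #(Finset.filter (fun D : Finset ((Fin 1 ⊕ Fin 0) ⊕ Unit) => isTDS (triChainPendant 0) D ∧ #D = 2) Finset.univ) = 1 := by decide
  norm_num [Finset.sum_range_succ, h0, h1, h2]

set_option maxRecDepth 10000 in
lemma base1 : tdPoly (triChainPendant 1) = X ^ 4 + 3 * X ^ 3 + 3 * X ^ 2 := by
  rw [tdPoly_counts]
  have h0 : #(Finset.filter (fun D : Finset ((Fin 2 ⊕ Fin 1) ⊕ Unit) => isTDS (triChainPendant 1) D ∧ D = ∅) Finset.univ) = 0 := by decide
  have h1 : #(Finset.filter (fun D : Finset ((Fin 2 ⊕ Fin 1) ⊕ Unit) => isTDS (triChainPendant 1) D ∧ #D = 1) Finset.univ) = 0 := by decide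
  have h2 : #(Finset.filter (fun D : Finset ((Fin 2 ⊕ Fin 1) ⊕ Unit) => isTDS (triChainPendant 1) D ∧ #D = 2) Finset.univ) = 3 := by decide
  have h3 : #(Finset.filter (fun D : Finset ((Fin 2 ⊕ Fin 1) ⊕ Unit) => isTDS (triChainPendant 1) D ∧ #D = 3) Finset.univ) = 3 := by decide
  have h4 : #(Finset.filter (fun D : Finset ((Fin 2 ⊕ Fin 1) ⊕ Unit) => isTDS (triChainPendant 1) D ∧ #D = 4) Finset.univ) = 1 := by decide
  norm_num [Finset.sum_range_succ, h0, h1, h2, h3, h4]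
  ring

set_option maxRecDepth 100000 in
lemma baseT2 : tdPoly (triChain 2) = X ^ 5 + 5 * X ^ 4 + 6 * X ^ 3 + 4 * X ^ 2 := by
  rw [tdPoly_counts]
  have h0 : #(Finset.filter (fun D : Finset (Fin 3 ⊕ Fin 2) => isTDS (triChain 2) D ∧ D = ∅) Finset.univ) = 0 := by decide
  have h1 : #(Finset.filter (fun D : Finset (Fin 3 ⊕ Fin 2) => isTDS (triChain 2) D ∧ #D = 1) Finset.univ) = 0 := by decide
  have h2 : #(Finset.filter (fun D : Finset (Fin 3 ⊕ Fin 2) => isTDS (triChain 2) D ∧ #D = 2) Finset.univ) = 4 := by decide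
  have h3 : #(Finset.filter (fun D : Finset (Fin 3 ⊕ Fin 2) => isTDS (triChain 2) D ∧ #D = 3) Finset.univ) = 6 := by decide
  have h4 : #(Finset.filter (fun D : Finset (Fin 3 ⊕ Fin 2) => isTDS (triChain 2) D ∧ #D = 4) Finset.univ) = 5 := by decide
  have h5 : #(Finset.filter (fun D : Finset (Fin 3 ⊕ Fin 2) => isTDS (triChain 2) D ∧ #D = 5) Finset.univ) = 1 := by decide
  norm_num [Finset.sum_range_succ, h0, h1, h2, h3, h4, h5]
  ring

theorem tdPoly_triChainPendant_rec (n : ℕ) (hn : 2 ≤ n) :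
    tdPoly (triChainPendant n) =
      (X + 1) * (tdPoly (triChain n) - tdPoly (triChainPendant (n - 1))) +
        X ^ 2 * tdPoly (triChainPendant (n - 2)) ∧
    tdPoly (triChainPendant 0) = X ^ 2 ∧
    tdPoly (triChainPendant 1) = X ^ 4 + 3 * X ^ 3 + 3 * X ^ 2 ∧
    tdPoly (triChain 2) = X ^ 5 + 5 * X ^ 4 + 6 * X ^ 3 + 4 * X ^ 2 := by
  obtain ⟨m, rfl⟩ : ∃ m, n = m + 2 := ⟨n - 2, by omega⟩
  refine ⟨?_, base0, base1, baseT2⟩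
  have h1 : m + 2 - 1 = m + 1 := by omega
  have h2 : m + 2 - 2 = m := by omega
  rw [h1, h2]
  exact main_rec m
end
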